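/- If f and g are Boolean functions on n ≥ 1 variables differing in exactly one input, then the spectral entropies satisfy |H[f] − H[g]| ≤ 12n/√(2^n). -/
import Mathlib


noncomputable section

/-- The ±1 value of a Boolean input bit: `true` ↦ -1, `false` ↦ +1. -/
def bval (b : Bool) : ℝ := if b then -1 else 1

/-- The Fourier basis character χ_S(x) = ∏_{i∈S} x_i. -/
def chi {n : ℕ} (S : Finset (Fin n)) (x : Fin n → Bool) : ℝ := ∏ i ∈ S, bval (x i)

/-- Fourier coefficient f̂(S) = E_x[f(x) χ_S(x)] under the uniform measure. -/
def fhat {n : ℕ} (f : (Fin n → Bool) → ℝ) (S : Finset (Fin n)) : ℝ :=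
  (∑ x : Fin n → Bool, f x * chi S x) / 2 ^ n

/-- f is a Boolean function (takes values ±1). -/
def IsBooleanFunc {n : ℕ} (f : (Fin n → Bool) → ℝ) : Prop := ∀ x, f x = 1 ∨ f x = -1

/-- Spectral entropy H[f] = -Σ_S f̂(S)² log₂ f̂(S)² (with 0 · log 0 = 0). -/
def spectralEntropy {n : ℕ} (f : (Fin n → Bool) → ℝ) : ℝ :=
  -∑ S : Finset (Fin n), (fhat f S) ^ 2 * Real.logb 2 ((fhat f S) ^ 2)

lemma bval_mul_self (b : Bool) : bval b * bval b = 1 := by cases b <;> simp [bval]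

lemma abs_bval (b : Bool) : |bval b| = 1 := by cases b <;> simp [bval]

lemma abs_chi {n : ℕ} (S : Finset (Fin n)) (x : Fin n → Bool) : |chi S x| = 1 := by
  rw [chi, Finset.abs_prod]
  exact Finset.prod_eq_one fun i _ => abs_bval _

lemma orth {n : ℕ} (x y : Fin n → Bool) :
    ∑ S : Finset (Fin n), chi S x * chi S y = if x = y then (2:ℝ) ^ n else 0 := by
  have h1 : ∑ S : Finset (Fin n), chi S x * chi S y
      = ∏ i, (bval (x i) * bval (y i) + 1) := by
    rw [← Finset.powerset_univ, Finset.prod_add]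
    simp [chi, Finset.prod_mul_distrib]
  rw [h1]
  by_cases hxy : x = y
  · subst hxy
    simp only [if_pos rfl]
    rw [Finset.prod_congr rfl (fun i _ => by rw [bval_mul_self])]
    norm_num
  · rw [if_neg hxy]
    obtain ⟨i, hi⟩ : ∃ i, x i ≠ y i := by
      by_contra h; push_neg at h; exact hxy (funext h)
    apply Finset.prod_eq_zero (Finset.mem_univ i)
    cases hx : x i <;> cases hy : y i <;> simp_all [bval]

lemma parseval {n : ℕ} (f : (Fin n → Bool) → ℝ) (hf : IsBooleanFunc f) :
    ∑ S : Finset (Fin n), (fhat f S) ^ 2 = 1 := by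
  have hN : (0:ℝ) < 2 ^ n := by positivity
  have key : ∑ S : Finset (Fin n), (∑ x : Fin n → Bool, f x * chi S x) ^ 2
      = (2:ℝ) ^ n * 2 ^ n := by
    have h1 : ∀ S : Finset (Fin n), (∑ x : Fin n → Bool, f x * chi S x) ^ 2
        = ∑ x : Fin n → Bool, ∑ y : Fin n → Bool, f x * f y * (chi S x * chi S y) := by
      intro S
      rw [sq, Finset.sum_mul_sum]
      exact Finset.sum_congr rfl fun x _ => Finset.sum_congr rfl fun y _ => by ring
    simp only [h1]
    rw [Finset.sum_comm]
    have h2 : ∀ x : Fin n → Bool,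
        (∑ S : Finset (Fin n), ∑ y : Fin n → Bool, f x * f y * (chi S x * chi S y))
        = (2:ℝ) ^ n := by
      intro x
      rw [Finset.sum_comm]
      have h3 : ∀ y : Fin n → Bool,
          ∑ S : Finset (Fin n), f x * f y * (chi S x * chi S y)
          = f x * f y * (if x = y then (2:ℝ) ^ n else 0) := by
        intro y
        rw [← Finset.mul_sum, orth]
      simp only [h3]
      have h4 : ∀ y : Fin n → Bool, f x * f y * (if x = y then (2:ℝ) ^ n else 0)
          = if y = x then f x * f x * (2:ℝ) ^ n else 0 := by
        intro y
        by_cases h : x = y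
        · subst h; simp
        · rw [if_neg h, if_neg (Ne.symm h), mul_zero]
      simp only [h4]
      rw [Finset.sum_ite_eq' Finset.univ x (fun _ => f x * f x * (2:ℝ) ^ n)]
      rcases hf x with h | h <;> simp [h]
    simp only [h2]
    simp [Finset.card_univ, mul_comm]
  have : ∑ S : Finset (Fin n), (fhat f S) ^ 2
      = (∑ S : Finset (Fin n), (∑ x : Fin n → Bool, f x * chi S x) ^ 2) / ((2:ℝ)^n * 2^n) := by
    rw [Finset.sum_div]
    exact Finset.sum_congr rfl fun S _ => by rw [fhat, div_pow]; ring_nf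
  rw [this, key, div_self (by positivity)]

lemma sum_abs_fhat_le {n : ℕ} (f : (Fin n → Bool) → ℝ) (hf : IsBooleanFunc f) :
    ∑ S : Finset (Fin n), |fhat f S| ≤ Real.sqrt (2 ^ n) := by
  have h1 : (∑ S : Finset (Fin n), |fhat f S|) ^ 2 ≤ (2:ℝ) ^ n := by
    calc (∑ S : Finset (Fin n), |fhat f S|) ^ 2
        ≤ (Finset.univ : Finset (Finset (Fin n))).card * ∑ S : Finset (Fin n), |fhat f S| ^ 2 :=
          sq_sum_le_card_mul_sum_sq
      _ = (2:ℝ) ^ n := by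
          simp only [sq_abs, parseval f hf, mul_one, Finset.card_univ, Fintype.card_finset,
            Fintype.card_fin]
          push_cast; ring
  have h2 : 0 ≤ ∑ S : Finset (Fin n), |fhat f S| :=
    Finset.sum_nonneg fun _ _ => abs_nonneg _
  calc ∑ S : Finset (Fin n), |fhat f S|
      = Real.sqrt ((∑ S : Finset (Fin n), |fhat f S|) ^ 2) := (Real.sqrt_sq h2).symm
    _ ≤ Real.sqrt (2 ^ n) := Real.sqrt_le_sqrt h1

lemma fhat_diff {n : ℕ} (f g : (Fin n → Bool) → ℝ)
    (hf : IsBooleanFunc f) (hg : IsBooleanFunc g) (x₀ : Fin n → Bool)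
    (heq : ∀ x, x ≠ x₀ → f x = g x) (S : Finset (Fin n)) :
    |fhat f S - fhat g S| ≤ 2 / 2 ^ n := by
  have hN : (0:ℝ) < 2 ^ n := by positivity
  have h1 : fhat f S - fhat g S = (f x₀ - g x₀) * chi S x₀ / 2 ^ n := by
    rw [fhat, fhat, div_sub_div_same, ← Finset.sum_sub_distrib]
    congr 1
    rw [Finset.sum_eq_single x₀]
    · ring
    · intro x _ hx; rw [heq x hx]; ring
    · intro h; exact absurd (Finset.mem_univ x₀) h
  rw [h1, abs_div, abs_mul, abs_chi, mul_one, abs_of_pos hN]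
  gcongr
  rcases hf x₀ with h1 | h1 <;> rcases hg x₀ with h2 | h2 <;> rw [h1, h2] <;> norm_num

lemma negMulLog_nonneg' {d : ℝ} (h0 : 0 ≤ d) (h1 : d ≤ 1) : 0 ≤ Real.negMulLog d := by
  rw [Real.negMulLog]
  have := Real.log_nonpos h0 h1
  nlinarith

lemma negMulLog_abs_sub {u v : ℝ} (hv0 : 0 ≤ v) (huv : v ≤ u) (hu1 : u ≤ 1) :
    |Real.negMulLog u - Real.negMulLog v| ≤ Real.negMulLog (u - v) + (u - v) := by
  have hu0 : 0 ≤ u := le_trans hv0 huv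
  have hd0 : 0 ≤ u - v := by linarith
  have hd1 : u - v ≤ 1 := by linarith
  have hpsi : 0 ≤ Real.negMulLog (u - v) := negMulLog_nonneg' hd0 hd1
  rw [abs_le]
  constructor
  · -- ψ v - ψ u ≤ u - v, i.e. u log u - v log v ≤ u - v
    have key : u * Real.log u - v * Real.log v ≤ u - v := by
      rcases eq_or_lt_of_le hv0 with hv | hv
      · rcases eq_or_lt_of_le hu0 with hu | hu
        · simp [← hv, ← hu]
        · have hlu : Real.log u ≤ 0 := Real.log_nonpos hu0 hu1
          rw [← hv]; simp; nlinarith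
      · have hu : 0 < u := lt_of_lt_of_le hv huv
        have hlu : Real.log u ≤ 0 := Real.log_nonpos hu0 hu1
        have h2 : Real.log (u / v) ≤ u / v - 1 := Real.log_le_sub_one_of_pos (by positivity)
        have h3 : Real.log (u / v) = Real.log u - Real.log v :=
          Real.log_div (ne_of_gt hu) (ne_of_gt hv)
        have h4 : v * Real.log (u / v) ≤ v * (u / v - 1) :=
          mul_le_mul_of_nonneg_left h2 hv0
        have h5 : v * (u / v - 1) = u - v := by field_simp
        nlinarith
    simp only [Real.negMulLog] at hpsi ⊢; nlinarith
  · -- ψ u - ψ v ≤ ψ (u - v) + (u - v); in fact ψ u ≤ ψ v + ψ (u-v)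
    have key : v * Real.log v + (u - v) * Real.log (u - v) ≤ u * Real.log u := by
      rcases eq_or_lt_of_le hu0 with hu | hu
      · have : v = 0 := by linarith
        simp [← hu, this]
      · have h1 : v * Real.log v ≤ v * Real.log u := by
          rcases eq_or_lt_of_le hv0 with hv | hv
          · simp [← hv]
          · exact mul_le_mul_of_nonneg_left (Real.log_le_log hv huv) hv0
        have h2 : (u - v) * Real.log (u - v) ≤ (u - v) * Real.log u := by
          rcases eq_or_lt_of_le hd0 with hd | hd
          · simp [← hd]
          · exact mul_le_mul_of_nonneg_left (Real.log_le_log hd (by linarith)) hd0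
        nlinarith
    simp only [Real.negMulLog] at hpsi ⊢; nlinarith

lemma negMulLog_le_linear {e t : ℝ} (he : 0 ≤ e) (ht : 0 < t) :
    Real.negMulLog e ≤ e * (-Real.log t) + t := by
  rcases eq_or_lt_of_le he with he0 | he0
  · simp [← he0, Real.negMulLog]; linarith
  · have h1 : Real.log (t / e) ≤ t / e - 1 := Real.log_le_sub_one_of_pos (by positivity)
    have h2 : Real.log (t / e) = Real.log t - Real.log e :=
      Real.log_div (ne_of_gt ht) (ne_of_gt he0)
    have h3 : e * Real.log (t / e) ≤ e * (t / e - 1) := mul_le_mul_of_nonneg_left h1 he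
    have h4 : e * (t / e - 1) = t - e := by field_simp
    rw [Real.negMulLog]; nlinarith

lemma spectralEntropy_eq {n : ℕ} (f : (Fin n → Bool) → ℝ) :
    spectralEntropy f
      = (∑ S : Finset (Fin n), Real.negMulLog ((fhat f S) ^ 2)) / Real.log 2 := by
  rw [spectralEntropy, Finset.sum_div, ← Finset.sum_neg_distrib]
  congr 1
  ext S
  rw [Real.negMulLog, Real.logb]
  ring

/-- If Boolean functions f, g on n ≥ 1 variables differ at exactly one input, then
|H[f] − H[g]| ≤ 12n/√(2^n). -/
theorem entropy_lipschitz {n : ℕ} (hn : 1 ≤ n) (f g : (Fin n → Bool) → ℝ)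
    (hf : IsBooleanFunc f) (hg : IsBooleanFunc g) (x₀ : Fin n → Bool)
    (hne : f x₀ ≠ g x₀) (heq : ∀ x, x ≠ x₀ → f x = g x) :
    |spectralEntropy f - spectralEntropy g| ≤ 12 * n / Real.sqrt (2 ^ n) := by
  have hN : (0:ℝ) < 2 ^ n := by positivity
  have hn1 : (1:ℝ) ≤ n := by exact_mod_cast hn
  have hlog2 : 0 < Real.log 2 := Real.log_pos (by norm_num)
  set s := Real.sqrt ((2:ℝ) ^ n) with hsdef
  have hs : 0 < s := Real.sqrt_pos.mpr hN
  have hss : s * s = 2 ^ n := Real.mul_self_sqrt hN.le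
  set θ := 2 * Real.sqrt 2 / ((2:ℝ) ^ n * s) with hθdef
  have hθpos : 0 < θ := by rw [hθdef]; positivity
  set L := -Real.log θ with hLdef
  have hL : L = (3/2 * n - 3/2) * Real.log 2 := by
    rw [hLdef, hθdef, Real.log_div (by positivity) (by positivity),
        Real.log_mul (by norm_num) (Real.sqrt_pos.mpr (by norm_num : (0:ℝ) < 2)).ne',
        Real.log_mul hN.ne' hs.ne',
        Real.log_sqrt (by norm_num : (0:ℝ) ≤ 2), hsdef, Real.log_sqrt hN.le, Real.log_pow]
    push_cast; ring
  have hL1 : 0 ≤ L + 1 := by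
    rw [hL]
    nlinarith [Real.log_nonneg (by norm_num : (1:ℝ) ≤ 2)]
  set ε := fun S : Finset (Fin n) => |(fhat f S)^2 - (fhat g S)^2| with hεdef
  have hsq1f : ∀ S : Finset (Fin n), (fhat f S)^2 ≤ 1 := by
    intro S
    have := Finset.single_le_sum (f := fun S : Finset (Fin n) => (fhat f S)^2)
      (fun i _ => sq_nonneg _) (Finset.mem_univ S)
    rwa [parseval f hf] at this
  have hsq1g : ∀ S : Finset (Fin n), (fhat g S)^2 ≤ 1 := by
    intro S
    have := Finset.single_le_sum (f := fun S : Finset (Fin n) => (fhat g S)^2)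
      (fun i _ => sq_nonneg _) (Finset.mem_univ S)
    rwa [parseval g hg] at this
  have hterm : ∀ S : Finset (Fin n),
      |Real.negMulLog ((fhat f S)^2) - Real.negMulLog ((fhat g S)^2)| ≤ ε S * (L + 1) + θ := by
    intro S
    have h1 : |Real.negMulLog ((fhat f S)^2) - Real.negMulLog ((fhat g S)^2)|
        ≤ Real.negMulLog (ε S) + ε S := by
      rcases le_total ((fhat g S)^2) ((fhat f S)^2) with h | h
      · have he : ε S = (fhat f S)^2 - (fhat g S)^2 := abs_of_nonneg (by linarith)
        rw [he]
        exact negMulLog_abs_sub (sq_nonneg _) h (hsq1f S)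
      · have he : ε S = (fhat g S)^2 - (fhat f S)^2 := by
          rw [hεdef]; simp only; rw [abs_sub_comm]; exact abs_of_nonneg (by linarith)
        rw [abs_sub_comm, he]
        exact negMulLog_abs_sub (sq_nonneg _) h (hsq1g S)
    have h2 : Real.negMulLog (ε S) ≤ ε S * L + θ := negMulLog_le_linear (abs_nonneg _) hθpos
    nlinarith [abs_nonneg ((fhat f S)^2 - (fhat g S)^2)]
  have hepsS : ∀ S : Finset (Fin n), ε S ≤ 2/2^n * (|fhat f S| + |fhat g S|) := by
    intro S
    have h1 : ε S = |fhat f S - fhat g S| * |fhat f S + fhat g S| := by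
      rw [hεdef]; simp only; rw [← abs_mul]; congr 1; ring
    rw [h1]
    exact mul_le_mul (fhat_diff f g hf hg x₀ heq S) (abs_add_le _ _) (abs_nonneg _) (by positivity)
  have hsum : ∑ S : Finset (Fin n), ε S ≤ 4 / s := by
    calc ∑ S : Finset (Fin n), ε S
        ≤ ∑ S : Finset (Fin n), 2/2^n * (|fhat f S| + |fhat g S|) :=
          Finset.sum_le_sum fun S _ => hepsS S
      _ = 2/2^n * ((∑ S : Finset (Fin n), |fhat f S|) + ∑ S : Finset (Fin n), |fhat g S|) := by
          rw [← Finset.mul_sum, Finset.sum_add_distrib]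
      _ ≤ 2/2^n * (s + s) := by
          have hA := sum_abs_fhat_le f hf
          have hB := sum_abs_fhat_le g hg
          rw [← hsdef] at hA hB
          have : (0:ℝ) ≤ 2/2^n := by positivity
          nlinarith
      _ = 4 / s := by
          rw [← hss]; field_simp; ring
  have hsum2 : ∑ S : Finset (Fin n), (ε S * (L + 1) + θ)
      = (∑ S : Finset (Fin n), ε S) * (L + 1) + 2 ^ n * θ := by
    rw [Finset.sum_add_distrib, ← Finset.sum_mul, Finset.sum_const, Finset.card_univ,
      Fintype.card_finset, Fintype.card_fin, nsmul_eq_mul]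
    push_cast; ring
  have hchain : |∑ S : Finset (Fin n),
        (Real.negMulLog ((fhat f S)^2) - Real.negMulLog ((fhat g S)^2))|
      ≤ 4 / s * (L + 1) + 2 ^ n * θ := by
    calc |∑ S : Finset (Fin n),
          (Real.negMulLog ((fhat f S)^2) - Real.negMulLog ((fhat g S)^2))|
        ≤ ∑ S : Finset (Fin n),
            |Real.negMulLog ((fhat f S)^2) - Real.negMulLog ((fhat g S)^2)| :=
          Finset.abs_sum_le_sum_abs _ _
      _ ≤ ∑ S : Finset (Fin n), (ε S * (L + 1) + θ) := Finset.sum_le_sum fun S _ => hterm S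
      _ = (∑ S : Finset (Fin n), ε S) * (L + 1) + 2 ^ n * θ := hsum2
      _ ≤ 4 / s * (L + 1) + 2 ^ n * θ := by
          have := mul_le_mul_of_nonneg_right hsum hL1
          linarith
  rw [spectralEntropy_eq f, spectralEntropy_eq g, div_sub_div_same, abs_div,
    abs_of_pos hlog2, ← Finset.sum_sub_distrib]
  rw [div_le_div_iff₀ hlog2 hs]
  have ht : Real.sqrt 2 ≤ 1.5 := by
    nlinarith [Real.sq_sqrt (by norm_num : (0:ℝ) ≤ 2), Real.sqrt_nonneg 2]
  calc |∑ S : Finset (Fin n),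
        (Real.negMulLog ((fhat f S)^2) - Real.negMulLog ((fhat g S)^2))| * s
      ≤ (4 / s * (L + 1) + 2 ^ n * θ) * s := mul_le_mul_of_nonneg_right hchain hs.le
    _ = 4 * (L + 1) + 2 * Real.sqrt 2 := by
        rw [hθdef]; field_simp
    _ ≤ 12 * n * Real.log 2 := by
        rw [hL]
        nlinarith [Real.log_two_gt_d9, mul_le_mul_of_nonneg_right hn1 hlog2.le,
          Real.sqrt_nonneg 2]
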